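/- arXiv:2504.10139 — 3 statements merged into one kernel-verified Lean document; each statement's English description precedes it below -/
import Mathlib

section
/- Let μ, a₀, a₁, x', y' ∈ ℝ and α_k, α_l, σ, σ_ε > 0. Let X ∼ N(μ, σ²) and ε ∼ N(0, σ_ε²) be independent, and set Y := a₀ + a₁X + ε. Define the 2×2 matrix A := [[1/α_k² + 1/σ² + a₁²/σ_ε², −a₁/σ_ε²], [−a₁/σ_ε², 1/α_l² + 1/σ_ε²]], the vector b := (x'/α_k² + μ/σ² − a₀a₁/σ_ε², y'/α_l² + a₀/σ_ε²), and the scalar c := −x'²/(2α_k²) − y'²/(2α_l²) − a₀²/(2σ_ε²) − μ²/(2σ²). Then E[ exp(−(X−x')²/(2α_k²)) · exp(−(Y−y')²/(2α_l²)) ] = (1/√(σ² σ_ε² det A)) · exp( c + (1/2)·bᵀ A⁻¹ b ). -/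
/-!
By independence, `(X, ε)` has law `N(μ, σ²) ⊗ N(0, σ_ε²)`, and translating the inner variable
`y = a₀ + a₁ x + e` turns the expectation into a Lebesgue integral over `ℝ²` of the product of the
two Gaussian densities and the two kernels. That integrand is `(2π σ σ_ε)⁻¹ exp(-zᵀAz/2 + bᵀz + c)`,
and completing the square twice, first in `y` and then in `x`, evaluates it.
-/

open MeasureTheory ProbabilityTheory Matrix Real
open scoped NNReal

theorem integral_exp_neg_mul_sq_div_two_add {p : ℝ} (hp : 0 < p) (q r : ℝ) :
    ∫ x, exp (-(p * x ^ 2) / 2 + q * x + r) = √(2 * π / p) * exp (r + q ^ 2 / (2 * p)) := by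
  have hsquare (x : ℝ) : -(p * x ^ 2) / 2 + q * x + r
      = -(p / 2) * (x - q / p) ^ 2 + (r + q ^ 2 / (2 * p)) := by
    field_simp; ring
  simp_rw [hsquare, exp_add]
  rw [integral_mul_const, integral_sub_right_eq_self (fun x ↦ exp (-(p / 2) * x ^ 2)),
    integral_gaussian, div_div_eq_mul_div, mul_comm π 2]

theorem integral_integral_exp_neg_quadratic {a b d : ℝ} (ha : 0 < a) (hdet : 0 < a * d - b ^ 2)
    (p q r : ℝ) :
    ∫ x, ∫ y, exp (-(a * x ^ 2 + 2 * b * x * y + d * y ^ 2) / 2 + (p * x + q * y) + r)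
      = 2 * π / √(a * d - b ^ 2)
        * exp (r + (d * p ^ 2 - 2 * b * p * q + a * q ^ 2) / (2 * (a * d - b ^ 2))) := by
  have hd : 0 < d := by nlinarith [sq_nonneg b]
  have hdet_ne : d * a - b ^ 2 ≠ 0 := by linarith
  have hinner (x : ℝ) :
      ∫ y, exp (-(a * x ^ 2 + 2 * b * x * y + d * y ^ 2) / 2 + (p * x + q * y) + r)
        = √(2 * π / d) * exp (-((a * d - b ^ 2) / d * x ^ 2) / 2 + (p - b * q / d) * x
            + (r + q ^ 2 / (2 * d))) := by
    calc _ = ∫ y, exp (-(d * y ^ 2) / 2 + (q - b * x) * y + (-(a * x ^ 2) / 2 + p * x + r)) := by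
          congr 1 with y; ring_nf
      _ = _ := by
          rw [integral_exp_neg_mul_sq_div_two_add hd]
          congr 2
          field_simp
          ring
  simp_rw [hinner]
  rw [integral_const_mul, integral_exp_neg_mul_sq_div_two_add (by positivity)]
  have hsqrt : √(2 * π / d) * √(2 * π / ((a * d - b ^ 2) / d)) = 2 * π / √(a * d - b ^ 2) := by
    rw [← sqrt_mul (by positivity), show 2 * π / d * (2 * π / ((a * d - b ^ 2) / d))
      = (2 * π) ^ 2 / (a * d - b ^ 2) by field_simp, sqrt_div' _ hdet.le, sqrt_sq (by positivity)]
  rw [← mul_assoc, hsqrt]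
  congr 2
  field_simp
  ring

theorem dotProduct_inv_mulVec_fin_two {A : Matrix (Fin 2) (Fin 2) ℝ} (hA : A 1 0 = A 0 1)
    (v : Fin 2 → ℝ) :
    v ⬝ᵥ (A⁻¹ *ᵥ v) = (A 1 1 * v 0 ^ 2 - 2 * A 0 1 * v 0 * v 1 + A 0 0 * v 1 ^ 2) / A.det := by
  simp only [inv_def, adjugate_fin_two, det_fin_two, hA, Ring.inverse_eq_inv', dotProduct, mulVec,
    Fin.sum_univ_two, Matrix.smul_apply, of_apply, cons_val', cons_val_zero, cons_val_fin_one,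
    cons_val_one, smul_eq_mul]
  ring

theorem ProbabilityTheory.IndepFun.integral_comp_eq_integral_integral {Ω α β : Type*}
    [MeasurableSpace Ω] [MeasurableSpace α] [MeasurableSpace β] {P : Measure Ω}
    [IsFiniteMeasure P] {X : Ω → α} {Y : Ω → β} (hXY : IndepFun X Y P) (hX : AEMeasurable X P)
    (hY : AEMeasurable Y P) {f : α × β → ℝ} (hf : Integrable f ((P.map X).prod (P.map Y))) :
    ∫ ω, f (X ω, Y ω) ∂P = ∫ x, ∫ y, f (x, y) ∂P.map Y ∂P.map X := by
  have hlaw := (indepFun_iff_map_prod_eq_prod_map_map hX hY).mp hXY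
  rw [← integral_prod f hf, ← hlaw, integral_map (hX.prodMk hY) (hlaw ▸ hf.aestronglyMeasurable)]

theorem integral_gaussianReal_comp_const_add (m μ : ℝ) (v : ℝ≥0) (g : ℝ → ℝ) :
    ∫ e, g (m + e) ∂gaussianReal μ v = ∫ y, g y ∂gaussianReal (μ + m) v := by
  rw [← gaussianReal_map_const_add]
  exact ((Homeomorph.addLeft m).measurableEmbedding.integral_map g).symm

theorem integral_comp_linear_add_of_indepFun {Ω : Type*} [MeasurableSpace Ω] {P : Measure Ω}
    [IsFiniteMeasure P] {X ε : Ω → ℝ} (hX : Measurable X) (hε : Measurable ε)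
    (hindep : IndepFun X ε P) {μ : ℝ} {v w : ℝ≥0} (hv : v ≠ 0) (hw : w ≠ 0)
    (hXlaw : P.map X = gaussianReal μ v) (hεlaw : P.map ε = gaussianReal 0 w) (a₀ a₁ : ℝ)
    {f : ℝ → ℝ → ℝ} (hf : Measurable (Function.uncurry f)) {C : ℝ} (hC : ∀ x y, |f x y| ≤ C) :
    ∫ ω, f (X ω) (a₀ + a₁ * X ω + ε ω) ∂P
      = ∫ x, ∫ y, gaussianPDFReal μ v x * gaussianPDFReal (a₀ + a₁ * x) w y * f x y := by
  have hint : Integrable (fun p : ℝ × ℝ ↦ f p.1 (a₀ + a₁ * p.1 + p.2))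
      ((P.map X).prod (P.map ε)) := by
    rw [hXlaw, hεlaw]
    exact .of_bound (hf.comp (f := fun p : ℝ × ℝ ↦ (p.1, a₀ + a₁ * p.1 + p.2))
      (by fun_prop)).aestronglyMeasurable C (ae_of_all _ fun p ↦ hC _ _)
  rw [hindep.integral_comp_eq_integral_integral hX.aemeasurable hε.aemeasurable hint, hXlaw,
    hεlaw, integral_gaussianReal_eq_integral_smul hv]
  congr 1 with x
  rw [integral_gaussianReal_comp_const_add (a₀ + a₁ * x) 0 w (f x), zero_add,
    integral_gaussianReal_eq_integral_smul hw, smul_eq_mul, ← integral_const_mul]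
  congr 1 with y
  simp only [smul_eq_mul]
  ring

theorem abs_exp_neg_sq_div_mul_exp_neg_sq_div_le_one (z w α β : ℝ) :
    |exp (-z ^ 2 / (2 * α ^ 2)) * exp (-w ^ 2 / (2 * β ^ 2))| ≤ 1 := by
  rw [abs_of_pos (by positivity), ← exp_add, exp_le_one_iff]
  exact add_nonpos (div_nonpos_of_nonpos_of_nonneg (by nlinarith) (by positivity))
    (div_nonpos_of_nonpos_of_nonneg (by nlinarith) (by positivity))

/-- Closed form of the joint expectation `E[k(X,x')·l(Y,y')]` for the linear-Gaussian
model `X ∼ N(μ,σ²)`, `Y = a₀ + a₁X + ε` with `ε ∼ N(0,σ_ε²)` independent of `X`, and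
Gaussian feature/response kernels with lengthscales `α_k`, `α_l`. -/
theorem stmt_8 {Ω : Type*} [MeasurableSpace Ω] (P : Measure Ω) [IsProbabilityMeasure P]
    (μ a₀ a₁ x' y' : ℝ) (αk αl σ σε : ℝ)
    (hαk : 0 < αk) (hαl : 0 < αl) (hσ : 0 < σ) (hσε : 0 < σε)
    (X ε : Ω → ℝ) (hX : Measurable X) (hε : Measurable ε)
    (hXlaw : P.map X = gaussianReal μ ((σ ^ 2).toNNReal))
    (hεlaw : P.map ε = gaussianReal 0 ((σε ^ 2).toNNReal))
    (hindep : IndepFun X ε P)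
    (A : Matrix (Fin 2) (Fin 2) ℝ)
    (hA : A = !![1 / αk ^ 2 + 1 / σ ^ 2 + a₁ ^ 2 / σε ^ 2, -a₁ / σε ^ 2;
                 -a₁ / σε ^ 2, 1 / αl ^ 2 + 1 / σε ^ 2])
    (b : Fin 2 → ℝ)
    (hb : b = ![x' / αk ^ 2 + μ / σ ^ 2 - a₀ * a₁ / σε ^ 2, y' / αl ^ 2 + a₀ / σε ^ 2])
    (c : ℝ)
    (hc : c = -x' ^ 2 / (2 * αk ^ 2) - y' ^ 2 / (2 * αl ^ 2)
          - a₀ ^ 2 / (2 * σε ^ 2) - μ ^ 2 / (2 * σ ^ 2)) :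
    ∫ ω, Real.exp (-(X ω - x') ^ 2 / (2 * αk ^ 2)) *
        Real.exp (-((a₀ + a₁ * X ω + ε ω) - y') ^ 2 / (2 * αl ^ 2)) ∂P =
      (1 / Real.sqrt (σ ^ 2 * σε ^ 2 * A.det)) *
        Real.exp (c + (1 / 2) * (b ⬝ᵥ (A⁻¹ *ᵥ b))) := by
  rw [integral_comp_linear_add_of_indepFun hX hε hindep (by simp; positivity) (by simp; positivity)
    hXlaw hεlaw a₀ a₁ (f := fun x y ↦ exp (-(x - x') ^ 2 / (2 * αk ^ 2)) *
      exp (-(y - y') ^ 2 / (2 * αl ^ 2))) (by fun_prop) (C := 1)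
    fun x y ↦ abs_exp_neg_sq_div_mul_exp_neg_sq_div_le_one _ _ _ _]
  have hexponent (x y : ℝ) :
      gaussianPDFReal μ (σ ^ 2).toNNReal x * gaussianPDFReal (a₀ + a₁ * x) (σε ^ 2).toNNReal y
          * (exp (-(x - x') ^ 2 / (2 * αk ^ 2)) * exp (-(y - y') ^ 2 / (2 * αl ^ 2)))
        = (√(2 * π * σ ^ 2) * √(2 * π * σε ^ 2))⁻¹ * exp (-(A 0 0 * x ^ 2
          + 2 * A 0 1 * x * y + A 1 1 * y ^ 2) / 2 + (b 0 * x + b 1 * y) + c) := by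
    simp only [gaussianPDFReal, Real.coe_toNNReal _ (sq_nonneg _), mul_inv]
    simp only [mul_assoc, mul_left_comm (rexp _) (√_)⁻¹, ← exp_add]
    congr 3
    subst hA hb hc
    simp only [of_apply, cons_val', cons_val_zero, cons_val_one, cons_val_fin_one]
    field_simp
    ring
  have hsymm : A 1 0 = A 0 1 := by simp [hA]
  have hdet : A.det = A 0 0 * A 1 1 - A 0 1 ^ 2 := by rw [det_fin_two, hsymm, sq]
  have hdet_pos : 0 < A.det := by
    rw [hA, det_fin_two_of, show (1 / αk ^ 2 + 1 / σ ^ 2 + a₁ ^ 2 / σε ^ 2)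
        * (1 / αl ^ 2 + 1 / σε ^ 2) - -a₁ / σε ^ 2 * (-a₁ / σε ^ 2)
      = (1 / αk ^ 2 + 1 / σ ^ 2) * (1 / αl ^ 2 + 1 / σε ^ 2) + a₁ ^ 2 / (αl ^ 2 * σε ^ 2) by
        field_simp; ring]
    positivity
  simp_rw [hexponent, integral_const_mul]
  rw [integral_integral_exp_neg_quadratic (by simp [hA]; positivity) (hdet ▸ hdet_pos),
    dotProduct_inv_mulVec_fin_two hsymm, ← hdet, ← mul_assoc]
  have hconst : (√(2 * π * σ ^ 2) * √(2 * π * σε ^ 2))⁻¹ * (2 * π / √A.det)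
      = 1 / √(σ ^ 2 * σε ^ 2 * A.det) := by
    rw [← sqrt_mul (by positivity), show 2 * π * σ ^ 2 * (2 * π * σε ^ 2)
      = (2 * π) ^ 2 * (σ ^ 2 * σε ^ 2) by ring, sqrt_mul (by positivity),
      sqrt_sq (by positivity), sqrt_mul (by positivity) A.det]
    field_simp
  rw [hconst]
  congr 2
  ring
end

section
/- Let m ∈ ℝ and α, σ_ε > 0. Then the double expectation of the Gaussian kernel with lengthscale α under two independent draws from N(m, σ_ε²) satisfies ∫_ℝ ∫_ℝ exp(−(y−y')²/(2α²)) dN(m, σ_ε²)(y') dN(m, σ_ε²)(y) = √( (σ_ε² + α²) / ( (1 + σ_ε²/α²)·(2σ_ε² + α²) ) ). In particular this value does not depend on the mean m. -/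
open MeasureTheory ProbabilityTheory Real
open scoped NNReal

/-!
Against `N(m, v)`, the Gaussian kernel `y' ↦ exp (-(y - y')² / (2τ))` integrates, by completing
the square, to `√(τ / (τ + v))` times an unnormalised Gaussian in `y` of variance `τ + v` centred
at `m`. Integrating that once more against `N(m, v)` gives `√((τ + v) / (τ + 2v))`, so the
double integral is `√(τ / (τ + 2v))` whatever `m` is.
-/

lemma gaussianPDFReal_mul_exp_neg_sq_sub_div {v : ℝ≥0} (hv : v ≠ 0) {τ : ℝ} (hτ : 0 < τ)
    (m c x : ℝ) :
    gaussianPDFReal m v x * exp (-(c - x) ^ 2 / (2 * τ)) =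
      ((√(2 * π * v))⁻¹ * exp (-(c - m) ^ 2 / (2 * (τ + v)))) *
        exp (-((τ + v) / (2 * v * τ)) * (x - (τ * m + v * c) / (τ + v)) ^ 2) := by
  have hv₀ : (0 : ℝ) < v := by positivity
  simp only [gaussianPDFReal, mul_assoc, ← exp_add]
  congr 2
  field_simp
  ring

lemma integral_exp_neg_sq_sub_div_gaussianReal {τ : ℝ} (hτ : 0 < τ) (m c : ℝ) (v : ℝ≥0) :
    ∫ x, exp (-(c - x) ^ 2 / (2 * τ)) ∂(gaussianReal m v) =
      √(τ / (τ + v)) * exp (-(c - m) ^ 2 / (2 * (τ + v))) := by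
  rcases eq_or_ne v 0 with rfl | hv
  · simp [gaussianReal_zero_var, div_self hτ.ne']
  have hv₀ : (0 : ℝ) < v := by positivity
  simp_rw [integral_gaussianReal_eq_integral_smul hv, smul_eq_mul,
    gaussianPDFReal_mul_exp_neg_sq_sub_div hv hτ, integral_const_mul,
    integral_sub_right_eq_self (fun x => exp (-((τ + v) / (2 * v * τ)) * x ^ 2)),
    integral_gaussian]
  have hsqrt : √(π / ((τ + v) / (2 * v * τ))) = √(2 * π * v) * √(τ / (τ + v)) := by
    rw [← sqrt_mul (by positivity)]
    congr 1
    field_simp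
  rw [hsqrt]
  field_simp

theorem stmt_11_general (m : ℝ) (α σε : ℝ) (hα : 0 < α) :
    ∫ y, (∫ y', Real.exp (-(y - y') ^ 2 / (2 * α ^ 2))
        ∂(gaussianReal m ((σε ^ 2).toNNReal))) ∂(gaussianReal m ((σε ^ 2).toNNReal)) =
      Real.sqrt ((σε ^ 2 + α ^ 2) / ((1 + σε ^ 2 / α ^ 2) * (2 * σε ^ 2 + α ^ 2))) := by
  have hτ : 0 < α ^ 2 := by positivity
  have hv : (((σε ^ 2).toNNReal : ℝ≥0) : ℝ) = σε ^ 2 := Real.coe_toNNReal _ (sq_nonneg σε)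
  simp_rw [integral_exp_neg_sq_sub_div_gaussianReal hτ, integral_const_mul, sub_sq_comm _ m]
  rw [integral_exp_neg_sq_sub_div_gaussianReal (by positivity), hv, sub_self,
    zero_pow two_ne_zero, neg_zero, zero_div, exp_zero, mul_one,
    ← sqrt_mul (by positivity)]
  congr 1
  field_simp
  ring

/-- Closed form of the double Gaussian-kernel expectation under two independent draws
from `N(m, σ_ε²)`; in particular the value does not depend on the mean `m`. -/
theorem stmt_11 (m : ℝ) (α σε : ℝ) (hα : 0 < α) (hσε : 0 < σε) :
    ∫ y, (∫ y', Real.exp (-(y - y') ^ 2 / (2 * α ^ 2))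
        ∂(gaussianReal m ((σε ^ 2).toNNReal))) ∂(gaussianReal m ((σε ^ 2).toNNReal)) =
      Real.sqrt ((σε ^ 2 + α ^ 2) / ((1 + σε ^ 2 / α ^ 2) * (2 * σε ^ 2 + α ^ 2))) :=
  stmt_11_general m α σε hα
end

section
/- Let 𝒳 be a set, k : 𝒳 × 𝒳 → ℝ a symmetric function, H a real Hilbert space, and λ > 0. Fix data points x₁,…,xₙ ∈ 𝒳 with feature vectors f₁,…,fₙ ∈ H, compressed inputs x̃₁,…,x̃ₘ ∈ 𝒳, and compressed feature vectors g₁,…,gₘ ∈ H. Let K_{X̃X̃} ∈ ℝ^{m×m} have entries k(x̃ᵢ,x̃ⱼ), assume W := (K_{X̃X̃} + λI)⁻¹ exists, let K_{X̃X} ∈ ℝ^{m×n} have entries k(x̃ᵢ, x_p), K_{XX̃} := K_{X̃X}ᵀ, set S := W K_{X̃X} K_{XX̃} W and V := W K_{X̃X}, and for a tuple (h₁,…,hₘ) ∈ Hᵐ define J(h₁,…,hₘ) := (1/n) Σ_{i,j=1}^{m} ⟪hᵢ, hⱼ⟫ S_{ji} − (2/n) Σ_{p=1}^{n} Σ_{i=1}^{m}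 ⟪f_p, hᵢ⟫ V_{ip}. Fix an index t and, for g ∈ H, let Ỹ[t:=g] denote (g₁,…,g_{t−1}, g, g_{t+1},…,gₘ), and define R(g) := (2/n) Σ_{i≠t} ⟪g, gᵢ⟫ S_{it} − (2/n) Σ_{p=1}^{n} ⟪f_p, g⟫ V_{tp}. Then for any g, g' ∈ H with ‖g‖ = ‖g'‖, J(Ỹ[t:=g]) − R(g) = J(Ỹ[t:=g']) − R(g'). That is, as a function of the t-th compressed response of fixed norm, the ACKIP objective differs from R by a constant. -/
open RealInnerProductSpace Matrix
open scoped BigOperators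

/-!
With `W` the inverse of the symmetric matrix `K_{X̃X̃} + λI`, the matrix `S = W K_{X̃X} K_{XX̃} W` is
symmetric. Expanding `J(Ỹ[t:=g])` in `g`, the terms not involving `g` are constant, the two cross
terms of the quadratic part merge (by symmetry of `S` and of the inner product) into the first sum of
`R(g)`, the linear part is the second sum of `R(g)`, and what is left, `‖g‖² S_tt / n`, depends on
`g` only through its norm.
-/

open Finset Function

theorem Matrix.IsSymm.mul_mul_transpose_mul {ι κ α : Type*} [Fintype ι] [Fintype κ]
    [CommSemiring α] {W : Matrix ι ι α} (hW : W.IsSymm) (B : Matrix ι κ α) :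
    (W * B * Bᵀ * W).IsSymm := by
  simp only [IsSymm, transpose_mul, transpose_transpose, hW.eq, Matrix.mul_assoc]

section UpdateSums

variable {ι κ H : Type*} [Fintype ι] [DecidableEq ι] [NormedAddCommGroup H]
  [InnerProductSpace ℝ H]

theorem Fintype.sum_apply_update {α M : Type*} [AddCommMonoid M] (F : ι → α → M) (h : ι → α)
    (t : ι) (a : α) :
    ∑ i, F i (update h t a i) = F t a + ∑ i ∈ univ.erase t, F i (h i) := by
  rw [Finset.sum_congr rfl fun i _ => apply_update F h t a i, sum_update_of_mem (mem_univ t),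
    sdiff_singleton_eq_erase]

theorem sum_sum_inner_update_update_mul {S : Matrix ι ι ℝ} (hS : S.IsSymm) (h : ι → H) (t : ι)
    (g : H) :
    ∑ i, ∑ j, ⟪update h t g i, update h t g j⟫ * S j i =
      ∑ i ∈ univ.erase t, ∑ j ∈ univ.erase t, ⟪h i, h j⟫ * S j i
        + 2 * ∑ i ∈ univ.erase t, ⟪g, h i⟫ * S i t + ‖g‖ ^ 2 * S t t := by
  rw [Fintype.sum_apply_update (fun i a => ∑ j, ⟪a, update h t g j⟫ * S j i),
    Fintype.sum_apply_update (fun j b => ⟪g, b⟫ * S j t),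
    sum_congr rfl fun i _ => Fintype.sum_apply_update (fun j b => ⟪h i, b⟫ * S j i) h t g,
    sum_add_distrib]
  have cross_term : ∀ i, ⟪h i, g⟫ * S t i = ⟪g, h i⟫ * S i t := fun i => by
    rw [real_inner_comm, hS.apply]
  simp only [cross_term, real_inner_self_eq_norm_sq]
  ring

theorem sum_sum_inner_update_mul [Fintype κ] (f : κ → H) (V : Matrix ι κ ℝ) (h : ι → H)
    (t : ι) (g : H) :
    ∑ p, ∑ i, ⟪f p, update h t g i⟫ * V i p =
      ∑ p, ∑ i ∈ univ.erase t, ⟪f p, h i⟫ * V i p + ∑ p, ⟪f p, g⟫ * V t p := by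
  rw [sum_congr rfl fun p _ => Fintype.sum_apply_update (fun i b => ⟪f p, b⟫ * V i p) h t g,
    sum_add_distrib, add_comm]

end UpdateSums

theorem stmt_14_general {𝒳 H : Type*} [NormedAddCommGroup H] [InnerProductSpace ℝ H]
    (k : 𝒳 → 𝒳 → ℝ) (hk : ∀ a b, k a b = k b a)
    {n m : ℕ}
    (f : Fin n → H)
    (xt : Fin m → 𝒳) (gs : Fin m → H)
    (lam : ℝ)
    (W : Matrix (Fin m) (Fin m) ℝ)
    (hW₁ : (Matrix.of (fun i j => k (xt i) (xt j)) + lam • (1 : Matrix (Fin m) (Fin m) ℝ)) * W = 1)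
    (KtX : Matrix (Fin m) (Fin n) ℝ)
    (S : Matrix (Fin m) (Fin m) ℝ) (hS : S = W * KtX * KtXᵀ * W)
    (V : Matrix (Fin m) (Fin n) ℝ)
    (J : (Fin m → H) → ℝ)
    (hJ : ∀ h : Fin m → H, J h =
        (1 / (n : ℝ)) * ∑ i, ∑ j, ⟪h i, h j⟫ * S j i
          - (2 / (n : ℝ)) * ∑ p, ∑ i, ⟪f p, h i⟫ * V i p)
    (t : Fin m)
    (R : H → ℝ)
    (hR : ∀ g : H, R g =
        (2 / (n : ℝ)) * ∑ i ∈ Finset.univ.erase t, ⟪g, gs i⟫ * S i t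
          - (2 / (n : ℝ)) * ∑ p, ⟪f p, g⟫ * V t p)
    (g g' : H) (hgg' : ‖g‖ = ‖g'‖) :
    J (Function.update gs t g) - R g = J (Function.update gs t g') - R g' := by
  have hW : W.IsSymm := by
    rw [← inv_eq_right_inv hW₁]
    exact ((IsSymm.ext fun i j => hk _ _).add (isSymm_one.smul lam)).inv
  have hS_symm : S.IsSymm := hS ▸ hW.mul_mul_transpose_mul KtX
  have reduced : ∀ g₀ : H, J (update gs t g₀) - R g₀ =
      (1 / (n : ℝ)) * ∑ i ∈ univ.erase t, ∑ j ∈ univ.erase t, ⟪gs i, gs j⟫ * S j i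
        - (2 / (n : ℝ)) * ∑ p, ∑ i ∈ univ.erase t, ⟪f p, gs i⟫ * V i p
        + (1 / (n : ℝ)) * (‖g₀‖ ^ 2 * S t t) := fun g₀ => by
    rw [hJ, hR, sum_sum_inner_update_update_mul hS_symm, sum_sum_inner_update_mul]
    ring
  rw [reduced g, reduced g', hgg']

/-- As a function of the `t`-th compressed response of fixed norm, the ACKIP objective
`J` differs from the reduced objective `R` by a constant; this justifies the accelerated
exhaustive search over discrete response values. -/
theorem stmt_14 {𝒳 H : Type*} [NormedAddCommGroup H] [InnerProductSpace ℝ H]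
    (k : 𝒳 → 𝒳 → ℝ) (hk : ∀ a b, k a b = k b a)
    {n m : ℕ}
    (x : Fin n → 𝒳) (f : Fin n → H)
    (xt : Fin m → 𝒳) (gs : Fin m → H)
    (lam : ℝ) (hlam : 0 < lam)
    (W : Matrix (Fin m) (Fin m) ℝ)
    (hW₁ : (Matrix.of (fun i j => k (xt i) (xt j)) + lam • (1 : Matrix (Fin m) (Fin m) ℝ)) * W = 1)
    (hW₂ : W * (Matrix.of (fun i j => k (xt i) (xt j)) + lam • (1 : Matrix (Fin m) (Fin m) ℝ)) = 1)
    (KtX : Matrix (Fin m) (Fin n) ℝ) (hKtX : KtX = Matrix.of fun i p => k (xt i) (x p))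
    (S : Matrix (Fin m) (Fin m) ℝ) (hS : S = W * KtX * KtXᵀ * W)
    (V : Matrix (Fin m) (Fin n) ℝ) (hV : V = W * KtX)
    (J : (Fin m → H) → ℝ)
    (hJ : ∀ h : Fin m → H, J h =
        (1 / (n : ℝ)) * ∑ i, ∑ j, ⟪h i, h j⟫ * S j i
          - (2 / (n : ℝ)) * ∑ p, ∑ i, ⟪f p, h i⟫ * V i p)
    (t : Fin m)
    (R : H → ℝ)
    (hR : ∀ g : H, R g =
        (2 / (n : ℝ)) * ∑ i ∈ Finset.univ.erase t, ⟪g, gs i⟫ * S i t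
          - (2 / (n : ℝ)) * ∑ p, ⟪f p, g⟫ * V t p)
    (g g' : H) (hgg' : ‖g‖ = ‖g'‖) :
    J (Function.update gs t g) - R g = J (Function.update gs t g') - R g' :=
  stmt_14_general k hk f xt gs lam W hW₁ KtX S hS V J hJ t R hR g g' hgg'
end
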